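/- If G is a monotone guest class containing K_2, then for every graph H we have c_u(G,H) ≤ ⌈log₂ χ(H)⌉ · (c_f(G,H))². -/

import Mathlib

/-!
Take a folded `𝒢`-cover of `H` with fibres of size at most `s = c_f(𝒢, H)` and label the guest
vertices over each host vertex injectively by `Fin s`. A proper colouring with `n = χ(H)` colours
splits the edges of `H` into `⌈log₂ n⌉` bipartite graphs, one per binary digit `j` of the colours.
For each `j` and each choice `t` of one label per side of the `j`-th bipartition, keep in every
guest the vertices whose label is the one `t` assigns to their side, and only the edges crossing
that bipartition; by monotonicity these pieces are still guests. Two kept vertices with the same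
image lie on the same side, hence carry the same label and coincide. So the pieces with a common
`(j, t)` are injective and pairwise vertex-disjoint, giving `⌈log₂ n⌉ · s²` unions.
-/

open SimpleGraph

/-- A class of simple graphs on arbitrary (small) vertex types. -/
def GraphClass : Type 1 := ∀ (V : Type), SimpleGraph V → Prop

/-- The class contains the graph `K₂`. -/
def GraphClass.ContainsK2 (𝒢 : GraphClass) : Prop := 𝒢 (Fin 2) ⊤

/-- Hereditary: closed under induced subgraphs. -/
def GraphClass.Hereditary (𝒢 : GraphClass) : Prop :=
  ∀ (V : Type) (G : SimpleGraph V), 𝒢 V G → ∀ s : Set V, 𝒢 s (G.induce s)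

/-- Monotone: closed under (not necessarily spanning) subgraphs. -/
def GraphClass.MonotoneClass (𝒢 : GraphClass) : Prop :=
  ∀ (V : Type) (G : SimpleGraph V), 𝒢 V G →
    ∀ (s : Set V) (G' : SimpleGraph s), G' ≤ G.induce s → 𝒢 s G'

/-- Component-closed: every connected component of a member is a member. -/
def GraphClass.ComponentClosed (𝒢 : GraphClass) : Prop :=
  ∀ (V : Type) (G : SimpleGraph V), 𝒢 V G →
    ∀ c : G.ConnectedComponent, 𝒢 c.supp (G.induce c.supp)

/-- The vertex-disjoint union of a family of graphs. -/
def disjUnionGraph {ι : Type} {W : ι → Type} (G : ∀ i, SimpleGraph (W i)) :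
    SimpleGraph (Σ i, W i) :=
  SimpleGraph.fromRel (fun p q => ∃ h : p.1 = q.1, (G q.1).Adj (h ▸ p.2) q.2)

/-- Union-closed: closed under finite vertex-disjoint unions. -/
def GraphClass.UnionClosed (𝒢 : GraphClass) : Prop :=
  ∀ (ι : Type), Finite ι → ∀ (W : ι → Type) (G : ∀ i, SimpleGraph (W i)),
    (∀ i, 𝒢 (W i) (G i)) → 𝒢 _ (disjUnionGraph G)

/-- The union-closure of a class: all graphs isomorphic to a finite
vertex-disjoint union of members of the class. -/
def GraphClass.unionClosure (𝒢 : GraphClass) : GraphClass :=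
  fun V G => ∃ (ι : Type) (_ : Finite ι) (W : ι → Type) (Gs : ∀ i, SimpleGraph (W i)),
    (∀ i, 𝒢 (W i) (Gs i)) ∧ Nonempty (G ≃g disjUnionGraph Gs)

/-- A `𝒢`-cover of a host graph `H`: a finite family of finite guest graphs together
with homomorphisms to `H` such that every edge of `H` is hit. -/
structure GraphCover {V : Type} (H : SimpleGraph V) : Type 1 where
  ι : Type
  finι : Finite ι
  W : ι → Type
  finW : ∀ i, Finite (W i)
  G : ∀ i, SimpleGraph (W i)
  φ : ∀ i, G i →g H
  edge_surj : ∀ ⦃u v : V⦄, H.Adj u v → ∃ i, ∃ a b, (G i).Adj a b ∧ φ i a = u ∧ φ i b = v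

namespace GraphCover

variable {V : Type} {H : SimpleGraph V}

/-- All guests belong to the class `𝒢`. -/
def InClass (c : GraphCover H) (𝒢 : GraphClass) : Prop := ∀ i, 𝒢 (c.W i) (c.G i)

/-- The cover is injective on each guest. -/
def Injective (c : GraphCover H) : Prop := ∀ i, Function.Injective (c.φ i)

/-- The total number of preimages of a vertex `v` of the host. -/
noncomputable def mult (c : GraphCover H) (v : V) : ℕ :=
  Nat.card {p : Σ i, c.W i // c.φ p.1 p.2 = v}

/-- `s`-local: every host vertex has at most `s` preimages. -/
def IsLocal (c : GraphCover H) (s : ℕ) : Prop := ∀ v, c.mult v ≤ s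

/-- `t`-global: at most `t` guests are used. -/
def IsGlobal (c : GraphCover H) (t : ℕ) : Prop := Nat.card c.ι ≤ t

/-- The guests can be grouped into `t` groups of pairwise vertex-disjoint guests,
i.e. the cover uses at most `t` members of the union-closure of the class. -/
def IsUnion (c : GraphCover H) (t : ℕ) : Prop :=
  ∃ f : c.ι → Fin t, ∀ i j, i ≠ j → f i = f j →
    Disjoint (Set.range (c.φ i)) (Set.range (c.φ j))

end GraphCover

/-- The global `𝒢`-covering number. -/
noncomputable def globalCN (𝒢 : GraphClass) {V : Type} (H : SimpleGraph V) : ℕ :=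
  sInf {t | ∃ c : GraphCover H, c.InClass 𝒢 ∧ c.Injective ∧ c.IsGlobal t}

/-- The union `𝒢`-covering number. -/
noncomputable def unionCN (𝒢 : GraphClass) {V : Type} (H : SimpleGraph V) : ℕ :=
  sInf {t | ∃ c : GraphCover H, c.InClass 𝒢 ∧ c.Injective ∧ c.IsUnion t}

/-- The local `𝒢`-covering number. -/
noncomputable def localCN (𝒢 : GraphClass) {V : Type} (H : SimpleGraph V) : ℕ :=
  sInf {s | ∃ c : GraphCover H, c.InClass 𝒢 ∧ c.Injective ∧ c.IsLocal s}

/-- The folded `𝒢`-covering number. -/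
noncomputable def foldedCN (𝒢 : GraphClass) {V : Type} (H : SimpleGraph V) : ℕ :=
  sInf {s | ∃ c : GraphCover H, c.InClass 𝒢 ∧ c.IsLocal s}

/-- `H` has treewidth at most `w`, via tree-decompositions. -/
def TreewidthLE {V : Type} (H : SimpleGraph V) (w : ℕ) : Prop :=
  ∃ (ι : Type) (T : SimpleGraph ι) (bag : ι → Set V),
    T.Connected ∧ T.IsAcyclic ∧
    (∀ v, ∃ i, v ∈ bag i) ∧
    (∀ ⦃u v⦄, H.Adj u v → ∃ i, u ∈ bag i ∧ v ∈ bag i) ∧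
    (∀ v, (T.induce {i | v ∈ bag i}).Connected) ∧
    (∀ i, Nat.card (bag i) ≤ w + 1)

/-- `G` has maximum average degree at most `d`. -/
def madLE {V : Type} (G : SimpleGraph V) (d : ℚ) : Prop :=
  ∀ s : Set V, s.Nonempty → (2 * Nat.card (G.induce s).edgeSet : ℚ) ≤ d * Nat.card s

/-- A star forest: an acyclic graph with no path on four vertices, i.e. every
connected component is a star. -/
def IsStarForest {V : Type} (F : SimpleGraph V) : Prop :=
  F.IsAcyclic ∧ ∀ a b c d, F.Adj a b → F.Adj b c → F.Adj c d → a = c ∨ b = d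

/-- `F` is a weak induced subgraph of `H`: a subgraph each of whose connected
components is an induced subgraph of `H`. -/
def IsWeakInduced {V : Type} (F H : SimpleGraph V) : Prop :=
  F ≤ H ∧ ∀ u v, F.Reachable u v → H.Adj u v → F.Adj u v

/-- No induced cycle of length at least 4. -/
def IsChordal {V : Type} (G : SimpleGraph V) : Prop :=
  ∀ (n : ℕ), 4 ≤ n → ∀ s : Set V, ¬ Nonempty ((G.induce s) ≃g SimpleGraph.cycleGraph n)

/-- The intersection graph of a family of sets. -/
def intersectionGraph {ι V : Type} (S : ι → Set V) : SimpleGraph ι :=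
  SimpleGraph.fromRel (fun i j => (S i ∩ S j).Nonempty)

/-- The shift graph of a directed graph `D`: vertices are the directed edges,
and `uv` is adjacent to `xy` iff `v = x` (or symmetrically `y = u`). -/
def shiftGraph {V : Type} (D : V → V → Prop) : SimpleGraph {p : V × V // D p.1 p.2} :=
  SimpleGraph.fromRel (fun e f => e.val.2 = f.val.1)

theorem Nat.exists_testBit_ne_of_lt_two_pow {a b k : ℕ} (hab : a ≠ b) (ha : a < 2 ^ k)
    (hb : b < 2 ^ k) : ∃ j < k, a.testBit j ≠ b.testBit j := by
  obtain ⟨j, hj⟩ : ∃ j, a.testBit j ≠ b.testBit j := by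
    by_contra! h
    exact hab (Nat.eq_of_testBit_eq h)
  refine ⟨j, ?_, hj⟩
  by_contra! hkj
  have hpow : 2 ^ k ≤ 2 ^ j := Nat.pow_le_pow_right two_pos hkj
  rw [Nat.testBit_eq_false_of_lt (ha.trans_le hpow),
    Nat.testBit_eq_false_of_lt (hb.trans_le hpow)] at hj
  exact hj rfl

/-- `σ j v` is the `j`-th binary digit of the colour of `v`. -/
theorem SimpleGraph.Colorable.exists_bool_separating {V : Type} {H : SimpleGraph V} {n : ℕ}
    (hH : H.Colorable n) :
    ∃ σ : Fin (Nat.clog 2 n) → V → Bool, ∀ ⦃u v⦄, H.Adj u v → ∃ j, σ j u ≠ σ j v := by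
  obtain ⟨col⟩ := hH
  have hn : n ≤ 2 ^ Nat.clog 2 n := Nat.le_pow_clog one_lt_two n
  refine ⟨fun j v => (col v : ℕ).testBit j, fun u v huv => ?_⟩
  obtain ⟨j, hj, hne⟩ := Nat.exists_testBit_ne_of_lt_two_pow
    (Fin.val_injective.ne (col.valid huv)) ((col u).isLt.trans_le hn) ((col v).isLt.trans_le hn)
  exact ⟨⟨j, hj⟩, hne⟩

def SimpleGraph.crossing {W β : Type*} (G : SimpleGraph W) (f : W → β) : SimpleGraph W where
  Adj a b := G.Adj a b ∧ f a ≠ f b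
  symm := ⟨fun _ _ h => ⟨h.1.symm, h.2.symm⟩⟩
  loopless := ⟨fun _ h => G.irrefl h.1⟩

theorem SimpleGraph.crossing_le {W β : Type*} (G : SimpleGraph W) (f : W → β) :
    G.crossing f ≤ G :=
  fun _ _ h => h.1

namespace GraphCover

variable {V : Type} {H : SimpleGraph V}

def ofAdj (H : SimpleGraph V) [Finite V] : GraphCover H where
  ι := {p : V × V // H.Adj p.1 p.2}
  finι := inferInstance
  W _ := Fin 2
  finW _ := inferInstance
  G _ := ⊤
  φ e := ⟨![e.1.1, e.1.2], fun {a b} hab => by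
    fin_cases a <;> fin_cases b
    exacts [absurd rfl hab, e.2, e.2.symm, absurd rfl hab]⟩
  edge_surj u v huv := ⟨⟨(u, v), huv⟩, 0, 1, by simp, rfl, rfl⟩

theorem isLocal_card_sigma (c : GraphCover H) : c.IsLocal (Nat.card (Σ i, c.W i)) := by
  have := c.finι
  have := c.finW
  exact fun v => Nat.card_le_card_of_injective Subtype.val Subtype.val_injective

theorem IsLocal.exists_label {c : GraphCover H} {s : ℕ} (hc : c.IsLocal s) :
    ∃ ℓ : (Σ i, c.W i) → Fin s, Function.Injective fun p => (c.φ p.1 p.2, ℓ p) := by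
  have := c.finι
  have := c.finW
  let F : ∀ v, {p : Σ i, c.W i // c.φ p.1 p.2 = v} ↪ Fin s := fun v =>
    (Finite.equivFin _).toEmbedding.trans (Fin.castLEEmb (hc v))
  have hF : ∀ p v (hp : c.φ p.1 p.2 = v), F (c.φ p.1 p.2) ⟨p, rfl⟩ = F v ⟨p, hp⟩ := by
    rintro p _ rfl
    rfl
  refine ⟨fun p => F _ ⟨p, rfl⟩, fun p q hpq => ?_⟩
  obtain ⟨hpq, hl⟩ := Prod.ext_iff.mp hpq
  exact congrArg Subtype.val ((F _).injective ((hF p _ hpq).symm.trans hl))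

theorem isUnion_of_disjoint {c : GraphCover H} {α : Type} [Finite α] (f : c.ι → α)
    (hf : ∀ i j, i ≠ j → f i = f j → Disjoint (Set.range (c.φ i)) (Set.range (c.φ j))) :
    c.IsUnion (Nat.card α) :=
  ⟨Finite.equivFin α ∘ f, fun i j hij hfij => hf i j hij ((Finite.equivFin α).injective hfij)⟩

section Split

variable (c : GraphCover H) {κ L : Type} [Finite κ] [Finite L] (σ : κ → V → Bool)
  (ℓ : (Σ i, c.W i) → L)

def splitSet (j : κ) (t : Bool → L) (i : c.ι) : Set (c.W i) :=
  {w | ℓ ⟨i, w⟩ = t (σ j (c.φ i w))}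

def split (hσ : ∀ ⦃u v⦄, H.Adj u v → ∃ j, σ j u ≠ σ j v) : GraphCover H where
  ι := (κ × (Bool → L)) × c.ι
  finι := by have := c.finι; infer_instance
  W x := c.splitSet σ ℓ x.1.1 x.1.2 x.2
  finW x := by have := c.finW x.2; infer_instance
  G x := ((c.G x.2).induce _).crossing fun w => σ x.1.1 (c.φ x.2 w)
  φ x := ⟨fun w => c.φ x.2 w, fun h => (c.φ x.2).map_adj h.1⟩
  edge_surj u v huv := by
    obtain ⟨j, hj⟩ := hσ huv
    obtain ⟨i, a, b, hab, rfl, rfl⟩ := c.edge_surj huv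
    let t : Bool → L := fun β => if β = σ j (c.φ i a) then ℓ ⟨i, a⟩ else ℓ ⟨i, b⟩
    refine ⟨((j, t), i), ⟨a, by simp [splitSet, t]⟩, ⟨b, by simp [splitSet, t, hj.symm]⟩,
      ⟨hab, hj⟩, rfl, rfl⟩

variable {c σ ℓ}
variable (hσ : ∀ ⦃u v⦄, H.Adj u v → ∃ j, σ j u ≠ σ j v)

/-- Within one group `(j, t)` the label of a guest vertex is determined by its image. -/
theorem split_sigma_eq (hℓ : Function.Injective fun p => (c.φ p.1 p.2, ℓ p))
    {x y : (c.split σ ℓ hσ).ι} (hxy : x.1 = y.1)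
    {p : (c.split σ ℓ hσ).W x} {q : (c.split σ ℓ hσ).W y}
    (hpq : (c.split σ ℓ hσ).φ x p = (c.split σ ℓ hσ).φ y q) :
    (⟨x.2, p.1⟩ : Σ i, c.W i) = ⟨y.2, q.1⟩ := by
  obtain ⟨⟨j, t⟩, i⟩ := x
  obtain ⟨⟨j', t'⟩, i'⟩ := y
  obtain ⟨rfl, rfl⟩ := Prod.ext_iff.mp hxy
  change c.φ i p.1 = c.φ i' q.1 at hpq
  refine hℓ (Prod.ext hpq ?_)
  change ℓ ⟨i, p.1⟩ = ℓ ⟨i', q.1⟩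
  rw [p.2, q.2]
  exact congrArg (t ∘ σ j) hpq

theorem inClass_split {𝒢 : GraphClass} (hmon : 𝒢.MonotoneClass) (hc : c.InClass 𝒢) :
    (c.split σ ℓ hσ).InClass 𝒢 :=
  fun x => hmon _ _ (hc x.2) _ _ (SimpleGraph.crossing_le _ _)

theorem injective_split (hℓ : Function.Injective fun p => (c.φ p.1 p.2, ℓ p)) :
    (c.split σ ℓ hσ).Injective := fun _ _ _ hpq =>
  Subtype.ext (sigma_mk_injective (split_sigma_eq hσ hℓ rfl hpq))

theorem isUnion_split (hℓ : Function.Injective fun p => (c.φ p.1 p.2, ℓ p)) :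
    (c.split σ ℓ hσ).IsUnion (Nat.card κ * Nat.card L ^ 2) := by
  convert isUnion_of_disjoint (c := c.split σ ℓ hσ) Prod.fst fun x y hxy hfxy => ?_ using 1
  · simp [Nat.card_fun]
  refine Set.disjoint_left.mpr ?_
  rintro _ ⟨p, rfl⟩ ⟨q, hq⟩
  exact hxy (Prod.ext hfxy (congrArg Sigma.fst (split_sigma_eq hσ hℓ hfxy hq.symm)))

end Split

end GraphCover

theorem exists_inClass_isLocal_foldedCN {𝒢 : GraphClass} (h2 : 𝒢.ContainsK2) {V : Type}
    [Finite V] (H : SimpleGraph V) : ∃ c : GraphCover H, c.InClass 𝒢 ∧ c.IsLocal (foldedCN 𝒢 H) :=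
  Nat.sInf_mem (s := {s | ∃ c : GraphCover H, c.InClass 𝒢 ∧ c.IsLocal s})
    ⟨_, GraphCover.ofAdj H, fun _ => h2, (GraphCover.ofAdj H).isLocal_card_sigma⟩

theorem unionCN_le_of_isLocal {𝒢 : GraphClass} (hmon : 𝒢.MonotoneClass) {V : Type}
    {H : SimpleGraph V} {c : GraphCover H} (hc : c.InClass 𝒢) {s : ℕ} (hs : c.IsLocal s)
    {κ : Type} [Finite κ] {σ : κ → V → Bool} (hσ : ∀ ⦃u v⦄, H.Adj u v → ∃ j, σ j u ≠ σ j v) :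
    unionCN 𝒢 H ≤ Nat.card κ * s ^ 2 := by
  obtain ⟨ℓ, hℓ⟩ := hs.exists_label
  refine Nat.sInf_le ⟨c.split σ ℓ hσ, c.inClass_split hσ hmon hc, c.injective_split hσ hℓ, ?_⟩
  simpa using c.isUnion_split hσ hℓ

/-- for a monotone guest class,
`c_u(𝒢,H) ≤ ⌈log₂ χ(H)⌉ · c_f(𝒢,H)²`. -/
theorem union_le_clog_chrom_mul_folded_sq (𝒢 : GraphClass) (h2 : 𝒢.ContainsK2)
    (hmon : 𝒢.MonotoneClass) {V : Type} [Fintype V] (H : SimpleGraph V) :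
    unionCN 𝒢 H ≤ Nat.clog 2 H.chromaticNumber.toNat * (foldedCN 𝒢 H) ^ 2 := by
  obtain ⟨c, hc, hs⟩ := exists_inClass_isLocal_foldedCN h2 H
  obtain ⟨σ, hσ⟩ := H.colorable_chromaticNumber_of_fintype.exists_bool_separating
  simpa using unionCN_le_of_isLocal hmon hc hs hσ
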